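/- Let 0 < a ≤ b with b ≥ 2a, κ = b/a, and define the scaled Chebyshev polynomial p(x) = T_d(ℓ(x))/T_d(ℓ(0)) where ℓ(x) = (b + a - 2x)/(b - a). Then p(0) = 1, |p(x)| ≤ 1 for x ∈ [0, a], |p(x)| ≤ 2·(1 + 2/√κ)^{-d} for x ∈ [a, b], and |p(x)| ≤ (8x/b)^d for x ≥ b. -/
import Mathlib

lemma cheb_formula (y : ℝ) (hy : 1 ≤ y) (d : ℕ) :
    (Polynomial.Chebyshev.T ℝ d).eval y =
      ((y + Real.sqrt (y^2-1))^d + (y - Real.sqrt (y^2-1))^d)/2 := by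
  have hs : Real.sqrt (y^2-1) ^ 2 = y^2 - 1 := Real.sq_sqrt (by nlinarith)
  induction d using Nat.twoStepInduction with
  | zero => simp
  | one => simp [Polynomial.Chebyshev.T_one]
  | more n ih1 ih2 =>
    have h : ((n:ℤ) + 2) = ((n + 2 : ℕ) : ℤ) := by push_cast; ring
    have ht := Polynomial.Chebyshev.T_add_two ℝ (n : ℤ)
    rw [h] at ht
    rw [ht]
    have h1 : ((n:ℤ) + 1) = ((n + 1 : ℕ) : ℤ) := by push_cast; ring
    simp only [Polynomial.eval_sub, Polynomial.eval_mul, Polynomial.eval_X,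
      Polynomial.eval_ofNat, h1, ih1, ih2]
    have huv : (y + Real.sqrt (y^2-1)) * (y - Real.sqrt (y^2-1)) = 1 := by nlinarith [hs]
    linear_combination (((y + Real.sqrt (y^2-1))^n + (y - Real.sqrt (y^2-1))^n)/2) * huv

lemma cheb_parity (y : ℝ) (d : ℕ) :
    (Polynomial.Chebyshev.T ℝ d).eval (-y) = (-1)^d * (Polynomial.Chebyshev.T ℝ d).eval y := by
  induction d using Nat.twoStepInduction with
  | zero => simp
  | one => simp [Polynomial.Chebyshev.T_one]
  | more n ih1 ih2 =>
    have h : ((n:ℤ) + 2) = ((n + 2 : ℕ) : ℤ) := by push_cast; ring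
    have ht := Polynomial.Chebyshev.T_add_two ℝ (n : ℤ)
    rw [h] at ht
    rw [ht]
    have h1 : ((n:ℤ) + 1) = ((n + 1 : ℕ) : ℤ) := by push_cast; ring
    simp only [Polynomial.eval_sub, Polynomial.eval_mul, Polynomial.eval_X,
      Polynomial.eval_ofNat, h1, ih1, ih2]
    ring

lemma cheb_abs_le_one (y : ℝ) (h1 : -1 ≤ y) (h2 : y ≤ 1) (d : ℕ) :
    |(Polynomial.Chebyshev.T ℝ d).eval y| ≤ 1 := by
  have := Real.cos_arccos h1 h2
  rw [← this, Polynomial.Chebyshev.T_real_cos]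
  exact Real.abs_cos_le_one _

lemma cheb_one_le (y : ℝ) (hy : 1 ≤ y) (d : ℕ) :
    1 ≤ (Polynomial.Chebyshev.T ℝ d).eval y := by
  rw [cheb_formula y hy]
  set s := Real.sqrt (y^2-1) with hsdef
  have hs : s ^ 2 = y^2 - 1 := Real.sq_sqrt (by nlinarith)
  have hs0 : 0 ≤ s := Real.sqrt_nonneg _
  have hu : 1 ≤ y + s := by linarith
  have hv : 0 < y - s := by nlinarith
  have huv : (y + s) * (y - s) = 1 := by nlinarith
  have hU : 1 ≤ (y + s)^d := one_le_pow₀ hu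
  have hV : 0 < (y - s)^d := pow_pos hv d
  have hUV : (y + s)^d * (y - s)^d = 1 := by
    rw [← mul_pow, huv, one_pow]
  nlinarith [sq_nonneg ((y+s)^d - (y-s)^d)]

lemma cheb_lb (y : ℝ) (hy : 1 ≤ y) (d : ℕ) :
    (1 + Real.sqrt (2*(y-1)))^d / 2 ≤ (Polynomial.Chebyshev.T ℝ d).eval y := by
  rw [cheb_formula y hy]
  set s := Real.sqrt (y^2-1) with hsdef
  have hs : s ^ 2 = y^2 - 1 := Real.sq_sqrt (by nlinarith)
  have hs0 : 0 ≤ s := Real.sqrt_nonneg _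
  have hv : 0 < y - s := by nlinarith
  have h1 : 1 + Real.sqrt (2*(y-1)) ≤ y + s := by
    have : Real.sqrt (2*(y-1)) ≤ s := by
      apply Real.sqrt_le_sqrt; nlinarith
    linarith
  have h0 : 0 ≤ 1 + Real.sqrt (2*(y-1)) := by positivity
  have := pow_le_pow_left₀ h0 h1 d
  have := pow_pos hv d
  nlinarith

lemma cheb_ub (y : ℝ) (hy : 1 ≤ y) (d : ℕ) :
    (Polynomial.Chebyshev.T ℝ d).eval y ≤ (2*y)^d := by
  rw [cheb_formula y hy]
  set s := Real.sqrt (y^2-1) with hsdef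
  have hs : s ^ 2 = y^2 - 1 := Real.sq_sqrt (by nlinarith)
  have hs0 : 0 ≤ s := Real.sqrt_nonneg _
  have hsy : s ≤ y := by nlinarith
  have hv : 0 ≤ y - s := by linarith
  have h1 : (y + s)^d ≤ (2*y)^d := pow_le_pow_left₀ (by linarith) (by linarith) d
  have h2 : (y - s)^d ≤ (2*y)^d := pow_le_pow_left₀ hv (by linarith) d
  linarith

lemma cheb_mono (y z : ℝ) (hy : 1 ≤ y) (hyz : y ≤ z) (d : ℕ) :
    (Polynomial.Chebyshev.T ℝ d).eval y ≤ (Polynomial.Chebyshev.T ℝ d).eval z := by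
  rw [cheb_formula y hy, cheb_formula z (le_trans hy hyz)]
  set s := Real.sqrt (y^2-1) with hsdef
  set t := Real.sqrt (z^2-1) with htdef
  have hs : s ^ 2 = y^2 - 1 := Real.sq_sqrt (by nlinarith)
  have ht : t ^ 2 = z^2 - 1 := Real.sq_sqrt (by nlinarith)
  have hs0 : 0 ≤ s := Real.sqrt_nonneg _
  have ht0 : 0 ≤ t := Real.sqrt_nonneg _
  have hst : s ≤ t := by apply Real.sqrt_le_sqrt; nlinarith
  have hu1 : 1 ≤ y + s := by linarith
  have huz : y + s ≤ z + t := by linarith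
  set A := (y + s)^d with hA
  set B := (z + t)^d with hB
  have hA1 : 1 ≤ A := one_le_pow₀ hu1
  have hAB : A ≤ B := pow_le_pow_left₀ (by linarith) huz d
  have hvy : 0 < y - s := by nlinarith
  have hvz : 0 < z - t := by nlinarith
  have huv : (y + s) * (y - s) = 1 := by nlinarith
  have huvz : (z + t) * (z - t) = 1 := by nlinarith
  have hAy : A * (y - s)^d = 1 := by rw [hA, ← mul_pow, huv, one_pow]
  have hBz : B * (z - t)^d = 1 := by rw [hB, ← mul_pow, huvz, one_pow]
  have hA0 : 0 < A := by linarith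
  have hB0 : 0 < B := by linarith
  have h1 : (y - s)^d = A⁻¹ := by field_simp at hAy ⊢; linarith [hAy]
  have h2 : (z - t)^d = B⁻¹ := by field_simp at hBz ⊢; linarith [hBz]
  rw [h1, h2]
  have hAi : A * A⁻¹ = 1 := mul_inv_cancel₀ (ne_of_gt hA0)
  have hBi : B * B⁻¹ = 1 := mul_inv_cancel₀ (ne_of_gt hB0)
  have hBinv : B⁻¹ ≤ 1 := by
    rw [inv_le_one_iff₀]; right; linarith
  nlinarith [mul_pos hA0 hB0]

/-- Bounds for the scaled Chebyshev polynomial `p(x) = T_d(ℓ(x))/T_d(ℓ(0))`, where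
`ℓ(x) = (b + a - 2x)/(b - a)` maps `[a,b]` onto `[-1,1]`, for `0 < a`, `b ≥ 2a`,
`κ = b/a`: `p(0) = 1`; `|p| ≤ 1` on `[0,a]`; `|p| ≤ 2(1 + 2/√κ)^{-d}` on `[a,b]`;
and `|p(x)| ≤ (8x/b)^d` for `x ≥ b`. -/
theorem stmt10 (a b : ℝ) (d : ℕ) (ha : 0 < a) (hb : 2 * a ≤ b) :
    let κ : ℝ := b / a
    let l : ℝ → ℝ := fun x => (b + a - 2 * x) / (b - a)
    let p : ℝ → ℝ := fun x =>
      (Polynomial.Chebyshev.T ℝ d).eval (l x) / (Polynomial.Chebyshev.T ℝ d).eval (l 0)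
    p 0 = 1 ∧
    (∀ x ∈ Set.Icc (0 : ℝ) a, |p x| ≤ 1) ∧
    (∀ x ∈ Set.Icc a b, |p x| ≤ 2 * ((1 + 2 / Real.sqrt κ) ^ d)⁻¹) ∧
    (∀ x : ℝ, b ≤ x → |p x| ≤ (8 * x / b) ^ d) := by
  intro κ l p
  have hba : 0 < b - a := by linarith
  have hb0 : 0 < b := by linarith
  have hl0 : 1 ≤ l 0 := by
    simp only [l]
    rw [le_div_iff₀ hba]; linarith
  have hT0 : 1 ≤ (Polynomial.Chebyshev.T ℝ d).eval (l 0) := cheb_one_le _ hl0 d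
  have hT0pos : 0 < (Polynomial.Chebyshev.T ℝ d).eval (l 0) := by linarith
  refine ⟨div_self (ne_of_gt hT0pos), ?_, ?_, ?_⟩
  · -- part 2
    rintro x ⟨hx0, hxa⟩
    have hlx1 : 1 ≤ l x := by
      simp only [l]; rw [le_div_iff₀ hba]; linarith
    have hlxl0 : l x ≤ l 0 := by
      simp only [l]; gcongr
    have h1 : 1 ≤ (Polynomial.Chebyshev.T ℝ d).eval (l x) := cheb_one_le _ hlx1 d
    have h2 := cheb_mono _ _ hlx1 hlxl0 d
    simp only [p]
    rw [abs_div, abs_of_nonneg (by linarith), abs_of_nonneg (by linarith)]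
    exact (div_le_one hT0pos).mpr h2
  · -- part 3
    rintro x ⟨hax, hxb⟩
    have hκ2 : (2:ℝ) ≤ κ := by
      simp only [κ]; rw [le_div_iff₀ ha]; linarith
    have hκpos : 0 < κ := by linarith
    have hsκ : 0 < Real.sqrt κ := Real.sqrt_pos.mpr hκpos
    set E := (1 + 2 / Real.sqrt κ) ^ d with hE
    have hEpos : 0 < E := by positivity
    -- lower bound on T(l 0)
    have hkey : E / 2 ≤ (Polynomial.Chebyshev.T ℝ d).eval (l 0) := by
      refine le_trans ?_ (cheb_lb (l 0) hl0 d)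
      have hs4 : Real.sqrt (4 / κ) = 2 / Real.sqrt κ := by
        rw [Real.sqrt_div (by norm_num : (0:ℝ) ≤ 4),
          show (4:ℝ) = 2^2 by norm_num, Real.sqrt_sq (by norm_num)]
      have hineq : 4 / κ ≤ 2 * (l 0 - 1) := by
        have e1 : 4 / κ = 4 * a / b := by
          simp only [κ]; field_simp
        have e2 : 2 * (l 0 - 1) = 4 * a / (b - a) := by
          simp only [l]; field_simp; ring
        rw [e1, e2, div_le_div_iff₀ hb0 hba]; nlinarith
      have h12 : 2 / Real.sqrt κ ≤ Real.sqrt (2 * (l 0 - 1)) := by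
        rw [← hs4]; exact Real.sqrt_le_sqrt hineq
      have := pow_le_pow_left₀ (by positivity) (by linarith : 1 + 2 / Real.sqrt κ ≤ 1 + Real.sqrt (2 * (l 0 - 1))) d
      rw [← hE] at this
      linarith
    have hlx1 : -1 ≤ l x := by
      simp only [l]; rw [le_div_iff₀ hba]; linarith
    have hlx2 : l x ≤ 1 := by
      simp only [l]; rw [div_le_iff₀ hba]; linarith
    have habs := cheb_abs_le_one (l x) hlx1 hlx2 d
    simp only [p]
    rw [abs_div, abs_of_pos hT0pos]
    calc |(Polynomial.Chebyshev.T ℝ d).eval (l x)| / (Polynomial.Chebyshev.T ℝ d).eval (l 0)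
        ≤ 1 / (E / 2) := div_le_div₀ (by norm_num) habs (by positivity) hkey
      _ = 2 * E⁻¹ := by rw [one_div_div]; ring
  · -- part 4
    intro x hx
    have hw : 1 ≤ -(l x) := by
      simp only [l]; rw [← neg_div, le_div_iff₀ hba]; linarith
    have hpar := cheb_parity (-(l x)) d
    rw [neg_neg] at hpar
    have hTw1 : 1 ≤ (Polynomial.Chebyshev.T ℝ d).eval (-(l x)) := cheb_one_le _ hw d
    have habs : |(Polynomial.Chebyshev.T ℝ d).eval (l x)|
        = (Polynomial.Chebyshev.T ℝ d).eval (-(l x)) := by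
      rw [hpar, abs_mul, abs_pow, abs_neg, abs_one, one_pow, one_mul,
        abs_of_nonneg (by linarith)]
    have hub := cheb_ub (-(l x)) hw d
    have h2w : 2 * -(l x) ≤ 8 * x / b := by
      have e : 2 * -(l x) = (2 * (2 * x - a - b)) / (b - a) := by
        simp only [l]; field_simp; ring
      rw [e, div_le_div_iff₀ hba hb0]
      nlinarith [mul_nonneg (le_trans hb0.le hx) (by linarith : (0:ℝ) ≤ b - 2*a)]
    have hpow : (2 * -(l x)) ^ d ≤ (8 * x / b) ^ d :=
      pow_le_pow_left₀ (by linarith) h2w d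
    simp only [p]
    calc |(Polynomial.Chebyshev.T ℝ d).eval (l x) / (Polynomial.Chebyshev.T ℝ d).eval (l 0)|
        = |(Polynomial.Chebyshev.T ℝ d).eval (l x)| / (Polynomial.Chebyshev.T ℝ d).eval (l 0) := by
          rw [abs_div, abs_of_pos hT0pos]
      _ ≤ |(Polynomial.Chebyshev.T ℝ d).eval (l x)| := div_le_self (abs_nonneg _) hT0
      _ = (Polynomial.Chebyshev.T ℝ d).eval (-(l x)) := habs
      _ ≤ (2 * -(l x)) ^ d := hub
      _ ≤ (8 * x / b) ^ d := hpow
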